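/- Let Φ ∈ ℝ^{m×n}, let T ⊆ {1,…,n} with #T = s, and let k ≥ 1. Assume Φ satisfies the RIP of order s+2k with radius δ_{s+2k} ∈ (0,1) and the RIP of order 2k with radius δ_{2k} ∈ (0,1), and that δ_{2k}² + 2δ_{s+2k} < 1. Let x ∈ ℝⁿ, let y = Φx (noiseless measurements), and let x* solve iBPDN with ε = 0. Set r = x − x_T, let T₀ be a set of k largest-magnitude entries of r, and let μ = √(δ_{s+2k}² + δ_{2k}²). Then ‖x_{Tᶜ} − x*_{Tᶜ}‖₂ ≤ ‖x − x*‖₂ ≤ D·k^{−1/2}‖r − r_{T₀}‖₁, where D = 2(1 + μ − δ_{s+2k})/(1 − δ_{s+2k} − μ). -/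

import Mathlib

open scoped BigOperators

/-- The Euclidean (ℓ₂) norm of a vector. -/
noncomputable def l2 {d : ℕ} (u : Fin d → ℝ) : ℝ := Real.sqrt (∑ i, (u i) ^ 2)

/-- The ℓ₁ norm of a vector. -/
noncomputable def l1 {d : ℕ} (u : Fin d → ℝ) : ℝ := ∑ i, |u i|

/-- `restr S u` equals `u` on `S` and `0` outside `S`. -/
def restr {n : ℕ} (S : Finset (Fin n)) (u : Fin n → ℝ) : Fin n → ℝ :=
  fun i => if i ∈ S then u i else 0

/-- Restricted Isometry Property of order `q` with radius `δ`. -/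
def RIP {m n : ℕ} (Φ : Matrix (Fin m) (Fin n) ℝ) (q : ℕ) (δ : ℝ) : Prop :=
  ∀ u : Fin n → ℝ, (Function.support u).ncard ≤ q →
    (1 - δ) * (l2 u) ^ 2 ≤ (l2 (Φ.mulVec u)) ^ 2 ∧
    (l2 (Φ.mulVec u)) ^ 2 ≤ (1 + δ) * (l2 u) ^ 2

/-- `xs` solves the innovative Basis Pursuit DeNoise program. -/
def solvesIBPDN {m n : ℕ} (Φ : Matrix (Fin m) (Fin n) ℝ) (y : Fin m → ℝ) (ε : ℝ)
    (T : Finset (Fin n)) (xs : Fin n → ℝ) : Prop :=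
  l2 (y - Φ.mulVec xs) ≤ ε ∧
  ∀ u : Fin n → ℝ, l2 (y - Φ.mulVec u) ≤ ε → l1 (restr Tᶜ xs) ≤ l1 (restr Tᶜ u)

/-- `S` is a set of largest-magnitude entries of `r`. -/
def isLargest {n : ℕ} (r : Fin n → ℝ) (S : Finset (Fin n)) : Prop :=
  ∀ i ∈ S, ∀ j ∉ S, |r j| ≤ |r i|


/-!
Put `h = x - x*`, so that `Φ h = 0`, and `Ω = T ∪ T₀`. Cut `Ωᶜ` greedily into blocks
`T₁, T₂, …` of the `k` largest remaining entries of `h`: each block after `T₁` is dominated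
entrywise by the mean of the previous one, so `∑_{j ≥ 2} ‖h_{T_j}‖₂ ≤ k^{-1/2} ‖h_{Ωᶜ}‖₁ =: σ`.
For `p = h_Ω + h_{T₁}` we have `Φ p = -∑_{j ≥ 2} Φ h_{T_j}`, and the RIP bounds the cross terms
`⟨Φ p, Φ h_{T_j}⟩`, which gives `(1 - δ_{s+2k}) ‖p‖₂ ≤ μ σ`, while `‖h‖₂ ≤ ‖p‖₂ + σ`.
The ℓ₁-minimality of `x*` off `T` gives the cone condition
`‖h_{Ωᶜ}‖₁ ≤ ‖h_{T₀}‖₁ + 2 ‖x_{Ωᶜ}‖₁`, i.e. `σ ≤ ‖h_Ω‖₂ + 2 k^{-1/2} ‖r - r_{T₀}‖₁`,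
and these inequalities combine into the bound.
-/

open Finset Matrix

section Norms

variable {d : ℕ}

lemma l2_nonneg (u : Fin d → ℝ) : 0 ≤ l2 u := Real.sqrt_nonneg _

lemma l1_nonneg (u : Fin d → ℝ) : 0 ≤ l1 u := sum_nonneg fun _ _ => abs_nonneg _

lemma l2_sq (u : Fin d → ℝ) : l2 u ^ 2 = u ⬝ᵥ u := by
  rw [l2, Real.sq_sqrt (by positivity)]
  simp [dotProduct, sq]

lemma l2_eq_norm (u : Fin d → ℝ) : l2 u = ‖WithLp.toLp 2 u‖ := by
  simp [l2, EuclideanSpace.norm_eq]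

lemma l2_eq_zero {u : Fin d → ℝ} : l2 u = 0 ↔ u = 0 := by
  simp [l2_eq_norm]

lemma l2_sum_le {ι : Type*} (s : Finset ι) (f : ι → Fin d → ℝ) :
    l2 (∑ i ∈ s, f i) ≤ ∑ i ∈ s, l2 (f i) := by
  simpa [l2_eq_norm, WithLp.toLp_sum] using norm_sum_le s fun i => WithLp.toLp 2 (f i)

lemma l2_add_le (u v : Fin d → ℝ) : l2 (u + v) ≤ l2 u + l2 v := by
  simpa [l2_eq_norm] using norm_add_le (WithLp.toLp 2 u) (WithLp.toLp 2 v)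

end Norms

section Restriction

variable {n : ℕ}

lemma restr_sub (S : Finset (Fin n)) (u v : Fin n → ℝ) :
    restr S (u - v) = restr S u - restr S v := by
  ext i; by_cases hi : i ∈ S <;> simp [restr, hi]

lemma restr_add_restr_sdiff {B S : Finset (Fin n)} (hBS : B ⊆ S) (u : Fin n → ℝ) :
    restr B u + restr (S \ B) u = restr S u := by
  ext i
  by_cases hiB : i ∈ B
  · simp [restr, hiB, hBS hiB]
  · by_cases hiS : i ∈ S <;> simp [restr, hiB, hiS]

lemma restr_add_restr_compl (S : Finset (Fin n)) (u : Fin n → ℝ) :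
    restr S u + restr Sᶜ u = u := by
  ext i; by_cases hi : i ∈ S <;> simp [restr, hi]

lemma restr_restr_of_subset {S S' : Finset (Fin n)} (h : S ⊆ S') (u : Fin n → ℝ) :
    restr S (restr S' u) = restr S u := by
  ext i
  by_cases hi : i ∈ S
  · simp [restr, hi, h hi]
  · simp [restr, hi]

lemma sub_restr_sub_restr (T T₀ : Finset (Fin n)) (x : Fin n → ℝ) :
    (x - restr T x) - restr T₀ (x - restr T x) = restr (T ∪ T₀)ᶜ x := by
  ext i; by_cases hi : i ∈ T <;> by_cases hi₀ : i ∈ T₀ <;> simp [restr, hi, hi₀]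

lemma l1_restr (S : Finset (Fin n)) (u : Fin n → ℝ) : l1 (restr S u) = ∑ i ∈ S, |u i| := by
  simp [l1, restr, apply_ite]

lemma l1_restr_add_l1_restr_sdiff {B S : Finset (Fin n)} (hBS : B ⊆ S) (v : Fin n → ℝ) :
    l1 (restr B v) + l1 (restr (S \ B) v) = l1 (restr S v) := by
  rw [l1_restr, l1_restr, l1_restr, add_comm, sum_sdiff hBS]

lemma l2_restr (S : Finset (Fin n)) (u : Fin n → ℝ) :
    l2 (restr S u) = √(∑ i ∈ S, u i ^ 2) := by
  simp [l2, restr]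

lemma l2_restr_le (S : Finset (Fin n)) (u : Fin n → ℝ) : l2 (restr S u) ≤ l2 u := by
  rw [l2_restr, l2]
  exact Real.sqrt_le_sqrt (sum_le_univ_sum_of_nonneg fun _ => sq_nonneg _)

lemma restr_dotProduct_restr {S S' : Finset (Fin n)} (h : Disjoint S S') (u v : Fin n → ℝ) :
    restr S u ⬝ᵥ restr S' v = 0 := by
  refine sum_eq_zero fun i _ => ?_
  by_cases hi : i ∈ S
  · simp [restr, disjoint_left.1 h hi]
  · simp [restr, hi]

lemma l2_restr_add_restr_sq {S S' : Finset (Fin n)} (h : Disjoint S S') (u v : Fin n → ℝ) :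
    l2 (restr S u + restr S' v) ^ 2 = l2 (restr S u) ^ 2 + l2 (restr S' v) ^ 2 := by
  simp only [l2_sq, add_dotProduct, dotProduct_add, restr_dotProduct_restr h,
    restr_dotProduct_restr h.symm]
  ring

lemma l1_restr_le_sqrt_card_mul_l2 (S : Finset (Fin n)) (u : Fin n → ℝ) :
    l1 (restr S u) ≤ √S.card * l2 (restr S u) := by
  rw [l1_restr, l2_restr, ← Real.sqrt_mul (Nat.cast_nonneg _)]
  refine Real.le_sqrt_of_sq_le ?_
  simpa using sq_sum_le_card_mul_sum_sq (s := S) (f := fun i => |u i|)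

end Restriction

lemma ncard_support_le_card {α M : Type*} [Zero M] {S : Finset α} {u : α → M}
    (h : ∀ i ∉ S, u i = 0) : (Function.support u).ncard ≤ S.card := by
  rw [← Set.ncard_coe_finset]
  exact Set.ncard_le_ncard (fun i hi => by_contra fun hiS => hi (h i hiS))

section RIP

variable {m n : ℕ} {Φ : Matrix (Fin m) (Fin n) ℝ} {q : ℕ} {δ : ℝ}

lemma RIP.mono (hR : RIP Φ q δ) {q' : ℕ} (hq : q' ≤ q) : RIP Φ q' δ :=
  fun u hu => hR u (hu.trans hq)

lemma RIP.abs_dotProduct_le (hR : RIP Φ q δ) {S S' : Finset (Fin n)} (hSS' : Disjoint S S')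
    (hq : S.card + S'.card ≤ q) (u v : Fin n → ℝ) :
    |Φ *ᵥ restr S u ⬝ᵥ Φ *ᵥ restr S' v| ≤ δ * (l2 (restr S u) * l2 (restr S' v)) := by
  set a := restr S u
  set b := restr S' v
  rcases (mul_nonneg (l2_nonneg a) (l2_nonneg b)).eq_or_lt with hAB | hAB
  · rcases mul_eq_zero.1 hAB.symm with hA | hB
    · rw [hA]; simp [l2_eq_zero.1 hA]
    · rw [hB]; simp [l2_eq_zero.1 hB]
  -- polarization: apply the RIP to `‖b‖ • a + t • b` for `t = ± ‖a‖`
  have hrip : ∀ t : ℝ, (1 - δ) * (l2 b ^ 2 * l2 a ^ 2 + t ^ 2 * l2 b ^ 2)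
        ≤ l2 b ^ 2 * (Φ *ᵥ a ⬝ᵥ Φ *ᵥ a) + 2 * l2 b * t * (Φ *ᵥ a ⬝ᵥ Φ *ᵥ b)
          + t ^ 2 * (Φ *ᵥ b ⬝ᵥ Φ *ᵥ b) ∧
      l2 b ^ 2 * (Φ *ᵥ a ⬝ᵥ Φ *ᵥ a) + 2 * l2 b * t * (Φ *ᵥ a ⬝ᵥ Φ *ᵥ b)
          + t ^ 2 * (Φ *ᵥ b ⬝ᵥ Φ *ᵥ b)
        ≤ (1 + δ) * (l2 b ^ 2 * l2 a ^ 2 + t ^ 2 * l2 b ^ 2) := by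
    intro t
    have hsupp : (Function.support (l2 b • a + t • b)).ncard ≤ q := by
      refine (ncard_support_le_card (S := S ∪ S') fun i hi => ?_).trans
        ((card_union_le _ _).trans hq)
      simp only [mem_union, not_or] at hi
      simp [a, b, restr, hi.1, hi.2]
    have hab : a ⬝ᵥ b = 0 := restr_dotProduct_restr hSS' u v
    have h := hR _ hsupp
    simp only [l2_sq, mulVec_add, mulVec_smul, add_dotProduct, dotProduct_add, smul_dotProduct,
      dotProduct_smul, smul_eq_mul, dotProduct_comm b a, hab,
      dotProduct_comm (Φ *ᵥ b) (Φ *ᵥ a)] at h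
    rw [← l2_sq a, ← l2_sq b] at h
    constructor <;> linarith [h.1, h.2]
  have h₁ := hrip (l2 a)
  have h₂ := hrip (-l2 a)
  rw [abs_le]
  constructor <;> nlinarith [h₁.1, h₁.2, h₂.1, h₂.2]

lemma abs_dotProduct_mulVec_restr_add_restr_le {q₁ q₂ : ℕ} {δ₁ δ₂ : ℝ} (hR₁ : RIP Φ q₁ δ₁)
    (hR₂ : RIP Φ q₂ δ₂) {Ω B C : Finset (Fin n)}
    (hΩB : Disjoint Ω B) (hΩC : Disjoint Ω C) (hBC : Disjoint B C)
    (hq₁ : Ω.card + C.card ≤ q₁) (hq₂ : B.card + C.card ≤ q₂) (h : Fin n → ℝ) :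
    |Φ *ᵥ (restr Ω h + restr B h) ⬝ᵥ Φ *ᵥ restr C h|
      ≤ √(δ₁ ^ 2 + δ₂ ^ 2) * l2 (restr Ω h + restr B h) * l2 (restr C h) := by
  have hCS : δ₁ * l2 (restr Ω h) + δ₂ * l2 (restr B h)
      ≤ √(δ₁ ^ 2 + δ₂ ^ 2) * l2 (restr Ω h + restr B h) := by
    rw [← Real.sqrt_sq (l2_nonneg (restr Ω h + restr B h)), l2_restr_add_restr_sq hΩB,
      ← Real.sqrt_mul (by positivity)]
    exact (le_abs_self _).trans (Real.abs_le_sqrt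
      (by nlinarith [sq_nonneg (δ₁ * l2 (restr B h) - δ₂ * l2 (restr Ω h))]))
  calc _ = |Φ *ᵥ restr Ω h ⬝ᵥ Φ *ᵥ restr C h + Φ *ᵥ restr B h ⬝ᵥ Φ *ᵥ restr C h| := by
        rw [mulVec_add, add_dotProduct]
    _ ≤ δ₁ * (l2 (restr Ω h) * l2 (restr C h)) + δ₂ * (l2 (restr B h) * l2 (restr C h)) :=
        (abs_add_le _ _).trans (add_le_add (hR₁.abs_dotProduct_le hΩC hq₁ h h)
          (hR₂.abs_dotProduct_le hBC hq₂ h h))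
    _ = (δ₁ * l2 (restr Ω h) + δ₂ * l2 (restr B h)) * l2 (restr C h) := by ring
    _ ≤ _ := mul_le_mul_of_nonneg_right hCS (l2_nonneg _)

end RIP

lemma Finset.exists_subset_card_eq_forall_le {ι : Type*} [DecidableEq ι] (f : ι → ℝ)
    {S : Finset ι} {k : ℕ} (hk : k ≤ S.card) :
    ∃ B ⊆ S, B.card = k ∧ ∀ i ∈ B, ∀ j ∈ S \ B, f j ≤ f i := by
  -- a `k`-subset of maximal `f`-sum cannot be improved by exchanging two elements
  obtain ⟨B, hB, hmax⟩ := (S.powersetCard k).exists_max_image (fun B => ∑ i ∈ B, f i)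
    (powersetCard_nonempty.2 hk)
  rw [mem_powersetCard] at hB
  refine ⟨B, hB.1, hB.2, fun i hi j hj => ?_⟩
  rw [mem_sdiff] at hj
  by_contra! hlt
  have hj' : j ∉ B.erase i := fun h => hj.2 (mem_of_mem_erase h)
  have hswap : insert j (B.erase i) ∈ S.powersetCard k := by
    rw [mem_powersetCard, card_insert_of_notMem hj', card_erase_of_mem hi, hB.2]
    refine ⟨insert_subset hj.1 ((erase_subset _ _).trans hB.1), ?_⟩
    have := card_pos.2 ⟨i, hi⟩
    omega
  have := hmax _ hswap
  rw [sum_insert hj', ← add_sum_erase B f hi] at this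
  linarith

lemma l2_restr_le_of_forall_abs_le {n k : ℕ} (hk : 0 < k) {B C : Finset (Fin n)} {v : Fin n → ℝ}
    (hB : B.card = k) (hC : C.card ≤ k) (hBC : ∀ i ∈ B, ∀ j ∈ C, |v j| ≤ |v i|) :
    l2 (restr C v) ≤ (√k)⁻¹ * l1 (restr B v) := by
  have hk' : (0 : ℝ) < k := by exact_mod_cast hk
  have hmean : ∀ j ∈ C, |v j| ≤ l1 (restr B v) / k := fun j hj => by
    rw [le_div_iff₀ hk', l1_restr, mul_comm, ← hB, ← nsmul_eq_mul, ← sum_const]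
    exact sum_le_sum fun i hi => hBC i hi j hj
  rw [l2_restr, ← Real.sqrt_inv, ← Real.sqrt_sq (l1_nonneg (restr B v)),
    ← Real.sqrt_mul (by positivity)]
  refine Real.sqrt_le_sqrt ?_
  calc ∑ j ∈ C, v j ^ 2 ≤ ∑ _j ∈ C, (l1 (restr B v) / k) ^ 2 := sum_le_sum fun j hj => by
        rw [← sq_abs]; exact pow_le_pow_left₀ (abs_nonneg _) (hmean j hj) 2
    _ ≤ k * (l1 (restr B v) / k) ^ 2 := by
        rw [sum_const, nsmul_eq_mul]; gcongr
    _ = (k : ℝ)⁻¹ * l1 (restr B v) ^ 2 := by field_simp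

lemma exists_blockDecomposition {n k : ℕ} (hk : 0 < k) (v : Fin n → ℝ) (S : Finset (Fin n)) :
    ∃ B ⊆ S, B.card ≤ k ∧ ∃ (N : ℕ) (C : Fin N → Finset (Fin n)),
      (∀ j, C j ⊆ S \ B ∧ (C j).card ≤ k) ∧
      restr B v + ∑ j, restr (C j) v = restr S v ∧
      ∑ j, l2 (restr (C j) v) ≤ (√k)⁻¹ * l1 (restr S v) := by
  induction S using Finset.strongInduction with
  | H S ih =>
  by_cases hS : S.card ≤ k
  · exact ⟨S, subset_rfl, hS, 0, Fin.elim0, nofun, by simp,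
      by simpa using mul_nonneg (inv_nonneg.2 (Real.sqrt_nonneg k)) (l1_nonneg _)⟩
  obtain ⟨B, hBS, hBk, hBmax⟩ :=
    exists_subset_card_eq_forall_le (fun i => |v i|) (not_le.1 hS).le
  have hB : B.Nonempty := card_pos.1 (hBk ▸ hk)
  obtain ⟨B', hB'S, hB'k, N, C, hC, hdecomp, hsum⟩ := ih (S \ B) (sdiff_ssubset hBS hB)
  refine ⟨B, hBS, hBk.le, N + 1, Fin.cons B' C, Fin.cases ⟨hB'S, hB'k⟩
    fun j => ⟨(hC j).1.trans sdiff_subset, (hC j).2⟩, ?_, ?_⟩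
  · rw [Fin.sum_univ_succ]
    simp only [Fin.cons_zero, Fin.cons_succ]
    rw [hdecomp, restr_add_restr_sdiff hBS]
  · rw [Fin.sum_univ_succ]
    simp only [Fin.cons_zero, Fin.cons_succ]
    calc _ ≤ (√k)⁻¹ * l1 (restr B v) + (√k)⁻¹ * l1 (restr (S \ B) v) :=
          add_le_add (l2_restr_le_of_forall_abs_le hk hBk hB'k
            fun i hi j hj => hBmax i hi j (hB'S hj)) hsum
      _ = _ := by rw [← mul_add, l1_restr_add_l1_restr_sdiff hBS]

theorem l2_restr_and_l2_le_of_mulVec_eq_zero {m n k : ℕ} {Φ : Matrix (Fin m) (Fin n) ℝ} {δ₁ δ₂ : ℝ}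
    {Ω : Finset (Fin n)} (hk : 0 < k) (hR₁ : RIP Φ (Ω.card + k) δ₁) (hR₂ : RIP Φ (2 * k) δ₂)
    (hδ₁ : δ₁ ≤ 1) {h : Fin n → ℝ} (hh : Φ *ᵥ h = 0) :
    (1 - δ₁) * l2 (restr Ω h) ≤ √(δ₁ ^ 2 + δ₂ ^ 2) * ((√k)⁻¹ * l1 (restr Ωᶜ h)) ∧
    (1 - δ₁) * l2 h ≤ (1 - δ₁ + √(δ₁ ^ 2 + δ₂ ^ 2)) * ((√k)⁻¹ * l1 (restr Ωᶜ h)) := by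
  set μ := √(δ₁ ^ 2 + δ₂ ^ 2)
  set σ := (√k)⁻¹ * l1 (restr Ωᶜ h)
  have hσ : 0 ≤ σ := mul_nonneg (inv_nonneg.2 (Real.sqrt_nonneg _)) (l1_nonneg _)
  obtain ⟨B, hBΩ, hBk, N, C, hC, hdecomp, hsum⟩ := exists_blockDecomposition hk h Ωᶜ
  have hΩB : Disjoint Ω B := disjoint_left.2 fun i hi hiB => mem_compl.1 (hBΩ hiB) hi
  set p := restr Ω h + restr B h
  have hhp : h = p + ∑ j, restr (C j) h := by
    rw [add_assoc, hdecomp, restr_add_restr_compl]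
  have hcross : ∀ j, -(Φ *ᵥ p ⬝ᵥ Φ *ᵥ restr (C j) h) ≤ μ * l2 p * l2 (restr (C j) h) :=
    fun j => (neg_le_abs _).trans <| abs_dotProduct_mulVec_restr_add_restr_le hR₁ hR₂ hΩB
      (disjoint_left.2 fun i hi hiC => mem_compl.1 (mem_sdiff.1 ((hC j).1 hiC)).1 hi)
      (disjoint_left.2 fun i hi hiC => (mem_sdiff.1 ((hC j).1 hiC)).2 hi)
      (by have := (hC j).2; omega) (by have := (hC j).2; omega) h
  have henergy : l2 (Φ *ᵥ p) ^ 2 ≤ μ * l2 p * σ := by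
    have hΦp : Φ *ᵥ p = -∑ j, Φ *ᵥ restr (C j) h := by
      rw [eq_neg_iff_add_eq_zero, ← mulVec_sum, ← mulVec_add, ← hhp, hh]
    calc l2 (Φ *ᵥ p) ^ 2 = ∑ j, -(Φ *ᵥ p ⬝ᵥ Φ *ᵥ restr (C j) h) := by
          rw [l2_sq]; nth_rewrite 2 [hΦp]; rw [dotProduct_neg, dotProduct_sum, sum_neg_distrib]
      _ ≤ ∑ j, μ * l2 p * l2 (restr (C j) h) := sum_le_sum fun j _ => hcross j
      _ ≤ μ * l2 p * σ := by
          rw [← mul_sum]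
          exact mul_le_mul_of_nonneg_left hsum (mul_nonneg (Real.sqrt_nonneg _) (l2_nonneg p))
  have hsupp : (Function.support p).ncard ≤ Ω.card + k := by
    refine (ncard_support_le_card (S := Ω ∪ B) fun i hi => ?_).trans
      ((card_union_le _ _).trans (by omega))
    simp only [mem_union, not_or] at hi
    simp [p, restr, hi.1, hi.2]
  have hpσ : (1 - δ₁) * l2 p ≤ μ * σ := by
    have hlower := (hR₁ p hsupp).1
    rcases (l2_nonneg p).eq_or_lt with hp | hp
    · rw [← hp, mul_zero]; exact mul_nonneg (Real.sqrt_nonneg _) hσ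
    · exact le_of_mul_le_mul_right (by nlinarith) hp
  have hΩp : l2 (restr Ω h) ≤ l2 p := by
    refine (pow_le_pow_iff_left₀ (l2_nonneg _) (l2_nonneg _) two_ne_zero).1 ?_
    rw [l2_restr_add_restr_sq hΩB]
    nlinarith [sq_nonneg (l2 (restr B h))]
  have hhpσ : l2 h ≤ l2 p + σ := by
    calc l2 h ≤ l2 p + l2 (∑ j, restr (C j) h) := by nth_rewrite 1 [hhp]; exact l2_add_le _ _
      _ ≤ l2 p + σ := by gcongr; exact (l2_sum_le _ _).trans hsum
  exact ⟨(mul_le_mul_of_nonneg_left hΩp (by linarith)).trans hpσ, by nlinarith⟩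

lemma l1_restr_compl_union_sub_le {n : ℕ} {T T₀ : Finset (Fin n)} {x xs : Fin n → ℝ}
    (hmin : l1 (restr Tᶜ xs) ≤ l1 (restr Tᶜ x)) :
    l1 (restr (T ∪ T₀)ᶜ (x - xs)) ≤ l1 (restr T₀ (x - xs)) + 2 * l1 (restr (T ∪ T₀)ᶜ x) := by
  have hpt : ∀ i, |restr (T ∪ T₀)ᶜ (x - xs) i| + |restr Tᶜ x i|
      ≤ |restr T₀ (x - xs) i| + 2 * |restr (T ∪ T₀)ᶜ x i| + |restr Tᶜ xs i| := by
    intro i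
    have := abs_sub (x i) (xs i)
    have := abs_sub_abs_le_abs_sub (x i) (xs i)
    by_cases hi : i ∈ T <;> by_cases hi₀ : i ∈ T₀ <;> simp [restr, hi, hi₀] <;> linarith
  have := sum_le_sum fun i (_ : i ∈ univ) => hpt i
  simp only [sum_add_distrib, ← mul_sum] at this
  simp only [l1] at hmin ⊢
  linarith

lemma inv_sqrt_mul_l1_restr_compl_union_sub_le {n k : ℕ} {T T₀ : Finset (Fin n)}
    (hT₀ : T₀.card ≤ k) {x xs : Fin n → ℝ} (hmin : l1 (restr Tᶜ xs) ≤ l1 (restr Tᶜ x)) :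
    (√k)⁻¹ * l1 (restr (T ∪ T₀)ᶜ (x - xs))
      ≤ l2 (restr (T ∪ T₀) (x - xs)) + 2 * ((√k)⁻¹ * l1 (restr (T ∪ T₀)ᶜ x)) := by
  have hT₀l1 : l1 (restr T₀ (x - xs)) ≤ √k * l2 (restr (T ∪ T₀) (x - xs)) := by
    rw [← restr_restr_of_subset (subset_union_right (s₁ := T)) (x - xs)]
    exact (l1_restr_le_sqrt_card_mul_l2 _ _).trans (mul_le_mul (Real.sqrt_le_sqrt
      (by exact_mod_cast hT₀)) (l2_restr_le _ _) (l2_nonneg _) (Real.sqrt_nonneg _))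
  rcases k.eq_zero_or_pos with rfl | hk
  · simpa using l2_nonneg _
  have hk' : (√k : ℝ) ≠ 0 := by positivity
  calc _ ≤ (√k)⁻¹ * (√k * l2 (restr (T ∪ T₀) (x - xs)) + 2 * l1 (restr (T ∪ T₀)ᶜ x)) := by
        refine mul_le_mul_of_nonneg_left ?_ (inv_nonneg.2 (Real.sqrt_nonneg _))
        linarith [l1_restr_compl_union_sub_le (T₀ := T₀) hmin]
    _ = _ := by field_simp

theorem ibpdn_noiseless_instance_optimality_general
    {m n : ℕ} (Φ : Matrix (Fin m) (Fin n) ℝ)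
    (T : Finset (Fin n)) (s k : ℕ) (hs : T.card = s) (hk : 1 ≤ k)
    (δsk δk : ℝ)
    (hRIPsk : RIP Φ (s + 2 * k) δsk) (hRIPk : RIP Φ (2 * k) δk)
    (hcond : δk ^ 2 + 2 * δsk < 1)
    (x : Fin n → ℝ) (y : Fin m → ℝ) (hy : y = Φ.mulVec x)
    (xstar : Fin n → ℝ) (hsol : solvesIBPDN Φ y 0 T xstar)
    (r : Fin n → ℝ) (hr : r = x - restr T x)
    (T₀ : Finset (Fin n)) (hT₀card : T₀.card = k)
    (μ : ℝ) (hμ : μ = Real.sqrt (δsk ^ 2 + δk ^ 2)) :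
    l2 (restr Tᶜ x - restr Tᶜ xstar) ≤ l2 (x - xstar) ∧
    l2 (x - xstar) ≤
      (2 * (1 + μ - δsk) / (1 - δsk - μ)) *
        ((Real.sqrt k)⁻¹ * l1 (r - restr T₀ r)) := by
  refine ⟨by rw [← restr_sub]; exact l2_restr_le _ _, ?_⟩
  have hΩ : (T ∪ T₀).card + k ≤ s + 2 * k := by have := card_union_le T T₀; omega
  have hcone := inv_sqrt_mul_l1_restr_compl_union_sub_le hT₀card.le (hsol.2 x (by simp [hy, l2]))
  rw [hr, sub_restr_sub_restr]
  set h := x - xstar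
  set Ω := T ∪ T₀
  have hΦh : Φ *ᵥ h = 0 := by
    rw [mulVec_sub, ← hy, l2_eq_zero.1 (le_antisymm hsol.1 (l2_nonneg _))]
  have hμ0 : 0 ≤ μ := hμ ▸ Real.sqrt_nonneg _
  have hμlt : μ < 1 - δsk := by
    rw [hμ, Real.sqrt_lt' (by nlinarith)]; linarith
  obtain ⟨hΩbound, hbound⟩ :=
    l2_restr_and_l2_le_of_mulVec_eq_zero hk (hRIPsk.mono hΩ) hRIPk (by linarith) hΦh
  rw [← hμ] at hΩbound hbound
  set σ := (√k)⁻¹ * l1 (restr Ωᶜ h)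
  set E := (√k)⁻¹ * l1 (restr Ωᶜ x)
  have hσ : (1 - δsk - μ) * σ ≤ 2 * (1 - δsk) * E := by
    nlinarith [mul_le_mul_of_nonneg_left hcone (by linarith : 0 ≤ 1 - δsk)]
  rw [div_mul_eq_mul_div, le_div_iff₀ (by linarith)]
  refine le_of_mul_le_mul_left ?_ (by linarith : 0 < 1 - δsk)
  nlinarith [mul_le_mul_of_nonneg_left hbound (by linarith : 0 ≤ 1 - δsk - μ),
    mul_le_mul_of_nonneg_left hσ (by linarith : 0 ≤ 1 - δsk + μ)]

/-- **Noiseless instance optimality of iBPDN, including the bound on `Tᶜ`.** -/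
theorem ibpdn_noiseless_instance_optimality
    {m n : ℕ} (Φ : Matrix (Fin m) (Fin n) ℝ)
    (T : Finset (Fin n)) (s k : ℕ) (hs : T.card = s) (hk : 1 ≤ k)
    (δsk δk : ℝ) (hδsk : δsk ∈ Set.Ioo (0 : ℝ) 1) (hδk : δk ∈ Set.Ioo (0 : ℝ) 1)
    (hRIPsk : RIP Φ (s + 2 * k) δsk) (hRIPk : RIP Φ (2 * k) δk)
    (hcond : δk ^ 2 + 2 * δsk < 1)
    (x : Fin n → ℝ) (y : Fin m → ℝ) (hy : y = Φ.mulVec x)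
    (xstar : Fin n → ℝ) (hsol : solvesIBPDN Φ y 0 T xstar)
    (r : Fin n → ℝ) (hr : r = x - restr T x)
    (T₀ : Finset (Fin n)) (hT₀card : T₀.card = k) (hT₀ : isLargest r T₀)
    (μ : ℝ) (hμ : μ = Real.sqrt (δsk ^ 2 + δk ^ 2)) :
    l2 (restr Tᶜ x - restr Tᶜ xstar) ≤ l2 (x - xstar) ∧
    l2 (x - xstar) ≤
      (2 * (1 + μ - δsk) / (1 - δsk - μ)) *
        ((Real.sqrt k)⁻¹ * l1 (r - restr T₀ r)) :=
  ibpdn_noiseless_instance_optimality_general Φ T s k hs hk δsk δk hRIPsk hRIPk hcond x y hy xstar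
    hsol r hr T₀ hT₀card μ hμ
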